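/- arXiv:1612.06057 — 4 statements merged into one kernel-verified Lean document; each statement's English description precedes it below -/
import Mathlib

section
/- Let u, v ∈ {0,1}^d with d_H(u, v) ≥ 4r for an integer r ≥ 2, and compress them with BCS using N = 8r² buckets chosen uniformly and independently per coordinate. Then E[d_H(u', v')] > 2r. -/
/-!
Let `S` be the set of coordinates where `u` and `v` differ and `c_b(j) = #{i ∈ S | b i = j}`.
Over `ZMod 2` the compressed vectors differ at `j` exactly when `c_b(j)` is odd, so
`d_H(u', v') = ∑ j, (1 - (-1) ^ c_b(j)) / 2`. The sign `(-1) ^ c_b(j)` is a product over the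
coordinates of `S`, each factor having mean `1 - 2 / N`; hence
`E[d_H(u', v')] = N / 2 * (1 - (1 - 2 / N) ^ ψ)` with `ψ = d_H(u, v)`. Since
`(1 - x) ^ n ≤ 1 / (1 + n x)` (Bernoulli applied to `(1 + x) ^ n`), taking `x = 2 / N = 1 / (4 r²)`
and `n = 4 r` gives `E[d_H(u', v')] ≥ 4 r² / (r + 1) > 2 r` for `r ≥ 2`.
-/

open Finset

section BCS

variable {ι κ : Type*} [Fintype ι] [DecidableEq κ]

def bcsCompress (b : ι → κ) (u : ι → ZMod 2) (j : κ) : ZMod 2 :=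
  ∑ i ∈ univ.filter (fun i => b i = j), u i

lemma bcsCompress_sub (b : ι → κ) (u v : ι → ZMod 2) (j : κ) :
    bcsCompress b u j - bcsCompress b v j = #{i | u i ≠ v i ∧ b i = j} := by
  have hsub : ∀ a c : ZMod 2, a - c = if a ≠ c then 1 else 0 := by decide
  rw [bcsCompress, bcsCompress, ← sum_sub_distrib, sum_congr rfl fun i _ => hsub (u i) (v i),
    sum_boole, filter_filter]
  simp only [and_comm]

lemma bcsCompress_ne_iff (b : ι → κ) (u v : ι → ZMod 2) (j : κ) :
    bcsCompress b u j ≠ bcsCompress b v j ↔ Odd #{i | u i ≠ v i ∧ b i = j} := by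
  rw [← sub_ne_zero, bcsCompress_sub, ZMod.natCast_ne_zero_iff_odd]

variable [Fintype κ]

lemma hammingDist_bcsCompress (b : ι → κ) (u v : ι → ZMod 2) :
    (hammingDist (bcsCompress b u) (bcsCompress b v) : ℝ) =
      ∑ j, (1 - (-1) ^ #{i | u i ≠ v i ∧ b i = j}) / 2 := by
  rw [hammingDist, ← sum_boole]
  refine sum_congr rfl fun j _ => ?_
  rcases Nat.even_or_odd #{i | u i ≠ v i ∧ b i = j} with h | h
  · simp [bcsCompress_ne_iff, h.neg_one_pow, Nat.not_odd_iff_even.mpr h]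
  · simp [bcsCompress_ne_iff, h.neg_one_pow, h]

omit [DecidableEq κ] in
lemma prod_ite_mem_eq_pow_mul_pow [DecidableEq ι] {M : Type*} [CommMonoid M] (s : Finset ι)
    (a c : M) : ∏ i, (if i ∈ s then a else c) = a ^ #s * c ^ #sᶜ := by
  rw [prod_ite, prod_const, prod_const, filter_univ_mem, ← compl_filter, filter_univ_mem]

lemma sum_ite_eq_neg_one_one (j : κ) :
    ∑ x : κ, (if x = j then (-1 : ℝ) else 1) = Fintype.card κ - 2 := by
  have : 1 ≤ Fintype.card κ := Fintype.card_pos_iff.mpr ⟨j⟩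
  rw [sum_ite, filter_eq', filter_ne']
  simp [card_univ, Nat.cast_sub this]
  ring

lemma sum_neg_one_pow_card_filter_eq [DecidableEq ι] (s : Finset ι) (j : κ) :
    ∑ b : ι → κ, (-1 : ℝ) ^ #{i ∈ s | b i = j} =
      (Fintype.card κ - 2 : ℝ) ^ #s * (Fintype.card κ : ℝ) ^ #sᶜ := by
  have hprod (b : ι → κ) : (-1 : ℝ) ^ #{i ∈ s | b i = j} =
      ∏ i, (if i ∈ s then (if b i = j then -1 else 1) else 1) := by
    rw [Fintype.prod_ite_mem, prod_ite, prod_const, prod_const_one, mul_one]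
  have hsum (i : ι) : ∑ x : κ, (if i ∈ s then (if x = j then (-1 : ℝ) else 1) else 1) =
      if i ∈ s then (Fintype.card κ - 2 : ℝ) else Fintype.card κ := by
    split_ifs
    · exact sum_ite_eq_neg_one_one j
    · simp
  rw [Fintype.sum_congr _ _ hprod,
    ← Fintype.prod_sum fun i x => if i ∈ s then (if x = j then (-1 : ℝ) else 1) else 1]
  simp_rw [hsum, prod_ite_mem_eq_pow_mul_pow]

lemma sum_hammingDist_bcsCompress_div_card [DecidableEq ι] [Nonempty κ] (u v : ι → ZMod 2) :
    (∑ b : ι → κ, (hammingDist (bcsCompress b u) (bcsCompress b v) : ℝ)) /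
        Fintype.card (ι → κ) =
      Fintype.card κ / 2 * (1 - (1 - 2 / Fintype.card κ) ^ hammingDist u v) := by
  set s : Finset ι := {i | u i ≠ v i}
  have hψ : hammingDist u v = #s := rfl
  have hd : Fintype.card ι = #sᶜ + #s := (card_compl_add_card s).symm
  have hN : (0 : ℝ) < Fintype.card κ := by exact_mod_cast Fintype.card_pos
  simp_rw [hammingDist_bcsCompress, ← filter_filter]
  rw [sum_comm]
  simp_rw [← sum_div, sum_sub_distrib, sum_neg_one_pow_card_filter_eq]
  simp only [sum_const, card_univ, Fintype.card_fun, nsmul_eq_mul, hd, hψ]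
  rw [one_sub_div hN.ne', div_pow]
  push_cast
  field_simp
  ring

end BCS

lemma one_sub_pow_le_inv_one_add_mul {K : Type*} [Field K] [LinearOrder K]
    [IsStrictOrderedRing K] {x : K} (hx0 : 0 ≤ x) (hx1 : x ≤ 1) (n : ℕ) :
    (1 - x) ^ n ≤ (1 + n * x)⁻¹ := by
  have hmul : (1 - x) ^ n * (1 + n * x) ≤ 1 :=
    calc (1 - x) ^ n * (1 + n * x) ≤ (1 - x) ^ n * (1 + x) ^ n :=
          mul_le_mul_of_nonneg_left (one_add_mul_le_pow (by linarith) n)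
            (pow_nonneg (by linarith) n)
      _ = (1 - x ^ 2) ^ n := by rw [← mul_pow]; ring
      _ ≤ 1 := pow_le_one₀ (by nlinarith) (by nlinarith)
  rwa [← one_div, le_div_iff₀ (by positivity)]

/-- If `d_H(u, v) ≥ 4r` for an integer `r ≥ 2` and BCS uses `N = 8r²` uniformly random
independent buckets, then the expected compressed Hamming distance exceeds `2r`. -/
theorem bcs_expected_hammingDist_gt (d N r : ℕ) (hr : 2 ≤ r) (hN : N = 8 * r ^ 2)
    (u v : Fin d → ZMod 2) (hdist : 4 * r ≤ hammingDist u v) :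
    (∑ b : Fin d → Fin N,
        (hammingDist
          (fun j : Fin N => ∑ i ∈ Finset.univ.filter (fun i => b i = j), u i)
          (fun j : Fin N => ∑ i ∈ Finset.univ.filter (fun i => b i = j), v i) : ℝ)) /
        (Fintype.card (Fin d → Fin N) : ℝ) > 2 * (r : ℝ) := by
  subst hN
  have : NeZero (8 * r ^ 2) := ⟨by simp; omega⟩
  refine lt_of_lt_of_eq ?_ (sum_hammingDist_bcsCompress_div_card u v).symm
  rw [Fintype.card_fin]
  push_cast
  have hr' : (2 : ℝ) ≤ r := by exact_mod_cast hr
  have hx0 : 0 ≤ 2 / (8 * r ^ 2 : ℝ) := by positivity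
  have hx1 : 2 / (8 * r ^ 2 : ℝ) ≤ 1 := by rw [div_le_one (by positivity)]; nlinarith
  have hpow : (1 - 2 / (8 * r ^ 2 : ℝ)) ^ hammingDist u v ≤ r / (r + 1) :=
    calc (1 - 2 / (8 * r ^ 2 : ℝ)) ^ hammingDist u v ≤ (1 - 2 / (8 * r ^ 2 : ℝ)) ^ (4 * r) :=
          pow_le_pow_of_le_one (by linarith) (by linarith) hdist
      _ ≤ (1 + (4 * r : ℕ) * (2 / (8 * r ^ 2 : ℝ)))⁻¹ := one_sub_pow_le_inv_one_add_mul hx0 hx1 _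
      _ = r / (r + 1) := by push_cast; field_simp; ring
  calc 2 * (r : ℝ) < (8 * r ^ 2 : ℝ) / 2 * (1 - r / (r + 1)) := by
        rw [one_sub_div (by positivity), add_sub_cancel_left, mul_one_div,
          lt_div_iff₀ (by positivity)]
        nlinarith
    _ ≤ _ := by gcongr
end

section
/- Any map f : {0,1}^d → {0,1}^k that, for some 0 < ε < 1, preserves Hamming distances up to a multiplicative factor (1 ± ε) among the zero vector e_0 and the n standard unit vectors e_1, ..., e_n (n ≤ d) must satisfy Σ_{m=0}^{⌊1+ε⌋} C(k, m) ≥ n; in particular k = Ω(n^{1/(1+ε)}). -/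
open Finset

/-!
The images `f e₁, …, f eₙ` are pairwise distinct, because a lower distortion `1 - ε > 0` keeps
distinct points apart, and they all lie in the Hamming ball of radius `⌊1 + ε⌋` around `f e₀`,
because `d(e₀, eᵢ) = 1`. Recording the set of coordinates in which a point differs from the
centre identifies that ball with the family of subsets of `Fin k` of size at most `⌊1 + ε⌋`,
which has `∑_{m ≤ ⌊1 + ε⌋} C(k, m)` members.
-/

section HammingBall

variable {ι : Type*} [Fintype ι]

theorem card_filter_card_le (r : ℕ) :
    #{s : Finset ι | #s ≤ r} = ∑ m ∈ range (r + 1), (Fintype.card ι).choose m := by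
  rw [card_eq_sum_card_fiberwise (f := fun s : Finset ι => #s) (t := range (r + 1))
    (fun s hs => mem_range.2 (Nat.lt_succ_of_le (mem_filter.1 hs).2))]
  refine sum_congr rfl fun m hm => ?_
  rw [← card_univ, ← card_powersetCard]
  congr 1
  ext s
  simp only [mem_filter, mem_univ, true_and, mem_powersetCard, subset_univ]
  constructor
  · exact And.right
  · rintro rfl
    exact ⟨Nat.le_of_lt_succ (mem_range.1 hm), rfl⟩

variable [DecidableEq ι]

def hammingBall (y : ι → Bool) (r : ℕ) : Finset (ι → Bool) :=
  {z | hammingDist y z ≤ r}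

def diffSetEquiv (y : ι → Bool) : (ι → Bool) ≃ Finset ι where
  toFun z := {i | y i ≠ z i}
  invFun s i := xor (y i) (decide (i ∈ s))
  left_inv z := by
    funext i
    cases hy : y i <;> cases hz : z i <;> simp [hy, hz]
  right_inv s := by
    ext i
    cases y i <;> by_cases i ∈ s <;> simp_all

theorem card_hammingBall (y : ι → Bool) (r : ℕ) :
    #(hammingBall y r) = ∑ m ∈ range (r + 1), (Fintype.card ι).choose m := by
  rw [← card_filter_card_le, card_equiv (diffSetEquiv y)]
  intro z
  simp [hammingBall, diffSetEquiv, hammingDist]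

end HammingBall

theorem hammingDist_false_decide_eq {ι : Type*} [Fintype ι] [DecidableEq ι] (a : ι) :
    hammingDist (fun _ => false) (fun x => decide (x = a)) = 1 := by
  rw [hammingDist, card_eq_one]
  exact ⟨a, by ext x; simp [eq_comm]⟩

theorem ne_of_one_sub_mul_hammingDist_le {ι κ : Type*} [Fintype ι] [Fintype κ]
    {β : ι → Type*} {γ : κ → Type*} [∀ i, DecidableEq (β i)] [∀ j, DecidableEq (γ j)]
    {x y : ∀ i, β i} {x' y' : ∀ j, γ j} {ε : ℝ} (hε : ε < 1) (hxy : x ≠ y)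
    (h : (1 - ε) * hammingDist x y ≤ hammingDist x' y') : x' ≠ y' := by
  rintro rfl
  have hpos : (0 : ℝ) < hammingDist x y := by exact_mod_cast hammingDist_pos.2 hxy
  rw [hammingDist_self, Nat.cast_zero] at h
  nlinarith

theorem binary_to_binary_lower_bound_general (d k n : ℕ) (hn : n ≤ d) (ε : ℝ)
    (hε1 : ε < 1)
    (f : (Fin d → Bool) → (Fin k → Bool))
    (e0 : Fin d → Bool) (e : Fin n → Fin d → Bool)
    (he0 : e0 = fun _ => false)
    (he : ∀ i : Fin n, e i = fun x : Fin d => decide ((x : ℕ) = (i : ℕ)))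
    (h1 : ∀ i : Fin n,
      (1 - ε) * (hammingDist e0 (e i) : ℝ) ≤ (hammingDist (f e0) (f (e i)) : ℝ) ∧
      (hammingDist (f e0) (f (e i)) : ℝ) ≤ (1 + ε) * (hammingDist e0 (e i) : ℝ))
    (h2 : ∀ i j : Fin n, i ≠ j →
      (1 - ε) * (hammingDist (e i) (e j) : ℝ) ≤ (hammingDist (f (e i)) (f (e j)) : ℝ) ∧
      (hammingDist (f (e i)) (f (e j)) : ℝ) ≤ (1 + ε) * (hammingDist (e i) (e j) : ℝ)) :
    n ≤ ∑ m ∈ Finset.range (⌊(1 : ℝ) + ε⌋₊ + 1), k.choose m := by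
  have he' : ∀ i, e i = fun x => decide (x = Fin.castLE hn i) := fun i => by
    rw [he i]
    funext x
    simp [Fin.ext_iff]
  have he_ne : ∀ i j, i ≠ j → e i ≠ e j := fun i j hij heq => by
    simpa [he', Fin.castLE_inj, hij] using congrFun heq (Fin.castLE hn i)
  have hinj : Function.Injective (f ∘ e) := fun i j hij => by
    by_contra hne
    exact ne_of_one_sub_mul_hammingDist_le hε1 (he_ne i j hne) (h2 i j hne).1 hij
  have hball : ∀ i, f (e i) ∈ hammingBall (f e0) ⌊1 + ε⌋₊ := fun i => by
    have hdist : hammingDist e0 (e i) = 1 := by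
      rw [he0, he']
      exact hammingDist_false_decide_eq _
    simpa [hammingBall, hdist] using Nat.le_floor (by simpa [hdist] using (h1 i).2)
  calc n = #(univ : Finset (Fin n)) := by simp
    _ ≤ #(hammingBall (f e0) ⌊1 + ε⌋₊) := card_le_card_of_injOn _ (fun i _ => hball i) hinj.injOn
    _ = _ := by rw [card_hammingBall, Fintype.card_fin]

/-- Any binary-to-binary map `f : {0,1}^d → {0,1}^k` preserving Hamming distances up to a
factor `(1 ± ε)` among the zero vector and the `n` standard unit vectors must satisfy
`∑_{m=0}^{⌊1+ε⌋} C(k, m) ≥ n`. -/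
theorem binary_to_binary_lower_bound (d k n : ℕ) (hn : n ≤ d) (ε : ℝ)
    (hε0 : 0 < ε) (hε1 : ε < 1)
    (f : (Fin d → Bool) → (Fin k → Bool))
    (e0 : Fin d → Bool) (e : Fin n → Fin d → Bool)
    (he0 : e0 = fun _ => false)
    (he : ∀ i : Fin n, e i = fun x : Fin d => decide ((x : ℕ) = (i : ℕ)))
    (h1 : ∀ i : Fin n,
      (1 - ε) * (hammingDist e0 (e i) : ℝ) ≤ (hammingDist (f e0) (f (e i)) : ℝ) ∧
      (hammingDist (f e0) (f (e i)) : ℝ) ≤ (1 + ε) * (hammingDist e0 (e i) : ℝ))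
    (h2 : ∀ i j : Fin n, i ≠ j →
      (1 - ε) * (hammingDist (e i) (e j) : ℝ) ≤ (hammingDist (f (e i)) (f (e j)) : ℝ) ∧
      (hammingDist (f (e i)) (f (e j)) : ℝ) ≤ (1 + ε) * (hammingDist (e i) (e j) : ℝ)) :
    n ≤ ∑ m ∈ Finset.range (⌊(1 : ℝ) + ε⌋₊ + 1), k.choose m :=
  binary_to_binary_lower_bound_general d k n hn ε hε1 f e0 e he0 he h1 h2
end

section
/- Let u, v ∈ {0,1}^d share at most 2ψ active positions and be compressed by BCS with N uniformly random independent bucket assignments. For any integer m ≥ 1, the probability that at least 2m active positions are involved in collisions within m distinct buckets (i.e., at least m disjoint pairs of active positions are co-located) is at most (2ψ)^{2m}/N^m. -/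
open Finset
open scoped Classical

/-!
Union bound over the candidate families of `m` disjoint pairs of active positions: there are
at most `(2ψ)^{2m}` of them, and for a fixed family with pairwise distinct entries the `m`
collision constraints cut the number of bucket assignments by a factor `N^m`, since the bucket
of each left entry is forced by that of its (free) right entry.
-/

namespace BucketCollision

open Function

variable {ι α β : Type*}

def pairEntries (p : ι → α × α) (x : ι × Bool) : α :=
  if x.2 then (p x.1).1 else (p x.1).2

noncomputable def collidingAssignments [Fintype ι] [Fintype α] (β : Type*) [Fintype β]
    (p : ι → α × α) : Finset (α → β) :=
  univ.filter fun b => ∀ t, b (p t).1 = b (p t).2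

theorem injective_fst_of_injective_pairEntries {p : ι → α × α}
    (hp : Injective (pairEntries p)) : Injective fun t => (p t).1 := fun s t h =>
  congrArg Prod.fst (@hp (s, true) (t, true) h)

theorem fst_ne_snd_of_injective_pairEntries {p : ι → α × α}
    (hp : Injective (pairEntries p)) (s t : ι) : (p s).1 ≠ (p t).2 := fun h =>
  Bool.noConfusion (congrArg Prod.snd (@hp (s, true) (t, false) h))

/-- Overwriting a colliding assignment on the left entries by arbitrary values is injective:
the right entries are untouched, and they determine the old values on the left entries. -/
theorem card_collidingAssignments_mul_le [Fintype ι] [Fintype α] [Fintype β]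
    {p : ι → α × α} (hp : Injective (pairEntries p)) :
    #(collidingAssignments β p) * Fintype.card β ^ Fintype.card ι ≤
      Fintype.card β ^ Fintype.card α := by
  have hfst := injective_fst_of_injective_pairEntries hp
  have hsnd (t : ι) : ¬∃ s, (p s).1 = (p t).2 :=
    fun ⟨s, hs⟩ => fst_ne_snd_of_injective_pairEntries hp s t hs
  let overwrite (bc : (α → β) × (ι → β)) : α → β := extend (fun t => (p t).1) bc.2 bc.1
  have hinj :
      Set.InjOn overwrite ↑(collidingAssignments β p ×ˢ (univ : Finset (ι → β))) := by
    rintro ⟨b₁, c₁⟩ h₁ ⟨b₂, c₂⟩ h₂ heq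
    simp only [coe_product, coe_univ, Set.mem_prod, Set.mem_univ, and_true, mem_coe,
      collidingAssignments, mem_filter, mem_univ, true_and] at h₁ h₂
    have hc : c₁ = c₂ := funext fun t => by
      simpa [overwrite, hfst.extend_apply] using congrFun heq (p t).1
    have hb : b₁ = b₂ := funext fun i => by
      by_cases hi : ∃ t, (p t).1 = i
      · obtain ⟨t, rfl⟩ := hi
        have := congrFun heq (p t).2
        simp only [overwrite, extend_apply' _ _ _ (hsnd t)] at this
        rw [h₁ t, h₂ t, this]
      · simpa [overwrite, extend_apply' _ _ _ hi] using congrFun heq i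
    rw [hb, hc]
  simpa [card_product, Fintype.card_fun] using
    card_le_card_of_injOn overwrite (fun _ _ => mem_coe.2 (mem_univ _)) hinj

theorem card_mul_le_of_forall_exists_colliding_pairs [Fintype ι] [Fintype α] [Fintype β]
    (A : Finset α) (S : Finset (α → β))
    (hS : ∀ b ∈ S, ∃ p : ι → α × α, Injective (pairEntries p) ∧
      (∀ t, (p t).1 ∈ A ∧ (p t).2 ∈ A) ∧ ∀ t, b (p t).1 = b (p t).2) :
    #S * Fintype.card β ^ Fintype.card ι ≤
      #A ^ (2 * Fintype.card ι) * Fintype.card β ^ Fintype.card α := by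
  set P := (Fintype.piFinset fun _ : ι => A ×ˢ A).filter fun p => Injective (pairEntries p)
  have hcover : S ⊆ P.biUnion (collidingAssignments β) := by
    intro b hb
    obtain ⟨p, hp, hA, hcol⟩ := hS b hb
    exact mem_biUnion.2 ⟨p, mem_filter.2 ⟨Fintype.mem_piFinset.2 fun t => mem_product.2 (hA t),
      hp⟩, mem_filter.2 ⟨mem_univ _, hcol⟩⟩
  calc _ ≤ (∑ p ∈ P, #(collidingAssignments β p)) * Fintype.card β ^ Fintype.card ι :=
        Nat.mul_le_mul_right _ ((card_le_card hcover).trans card_biUnion_le)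
    _ ≤ ∑ _p ∈ P, Fintype.card β ^ Fintype.card α := by
        rw [sum_mul]
        exact sum_le_sum fun p hp => card_collidingAssignments_mul_le (mem_filter.1 hp).2
    _ = #P * Fintype.card β ^ Fintype.card α := by rw [sum_const, smul_eq_mul]
    _ ≤ #(Fintype.piFinset fun _ : ι => A ×ˢ A) * Fintype.card β ^ Fintype.card α :=
        Nat.mul_le_mul_right _ (card_filter_le _ _)
    _ = _ := by rw [Fintype.card_piFinset, prod_const, card_product, card_univ, pow_mul, sq]

theorem card_div_card_le_of_forall_exists_colliding_pairs [Fintype ι] [Fintype α]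
    [DecidableEq α] [Fintype β] [Nonempty β] (A : Finset α) (S : Finset (α → β))
    (hS : ∀ b ∈ S, ∃ p : ι → α × α, Injective (pairEntries p) ∧
      (∀ t, (p t).1 ∈ A ∧ (p t).2 ∈ A) ∧ ∀ t, b (p t).1 = b (p t).2) :
    (#S : ℝ) / Fintype.card (α → β) ≤
      (#A : ℝ) ^ (2 * Fintype.card ι) / (Fintype.card β : ℝ) ^ Fintype.card ι := by
  rw [Fintype.card_fun, div_le_div_iff₀ (by positivity) (by positivity)]
  exact_mod_cast card_mul_le_of_forall_exists_colliding_pairs A S hS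

end BucketCollision

open BucketCollision in
theorem bcs_many_collisions_prob_general (d N ψ m : ℕ) (hN : 1 ≤ N)
    (u v : Fin d → ZMod 2)
    (hact : (Finset.univ.filter (fun i : Fin d => u i = 1 ∨ v i = 1)).card ≤ 2 * ψ) :
    ((Finset.univ.filter (fun b : Fin d → Fin N =>
        ∃ p : Fin m → Fin d × Fin d,
          Function.Injective
            (fun x : Fin m × Bool => if x.2 then (p x.1).1 else (p x.1).2) ∧
          (∀ t : Fin m,
            (u (p t).1 = 1 ∨ v (p t).1 = 1) ∧ (u (p t).2 = 1 ∨ v (p t).2 = 1)) ∧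
          (∀ t : Fin m, b (p t).1 = b (p t).2) ∧
          (∀ s t : Fin m, s ≠ t → b (p s).1 ≠ b (p t).1))).card : ℝ) /
      (Fintype.card (Fin d → Fin N) : ℝ) ≤
    (2 * (ψ : ℝ)) ^ (2 * m) / (N : ℝ) ^ m := by
  have : Nonempty (Fin N) := ⟨⟨0, hN⟩⟩
  refine (card_div_card_le_of_forall_exists_colliding_pairs (ι := Fin m)
    (univ.filter fun i : Fin d => u i = 1 ∨ v i = 1) _ fun b hb => ?_).trans ?_
  · obtain ⟨p, hp, hA, hcol, -⟩ := (mem_filter.1 hb).2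
    exact ⟨p, hp, by simpa using hA, hcol⟩
  · simp only [Fintype.card_fin]
    gcongr
    exact_mod_cast hact

/-- If `u, v` share at most `2ψ` active positions, then under a uniformly random
independent bucket assignment into `N` buckets, the probability that at least `m`
disjoint pairs of active positions are co-located (within `m` distinct buckets) is at
most `(2ψ)^{2m}/N^m`. -/
theorem bcs_many_collisions_prob (d N ψ m : ℕ) (hN : 1 ≤ N) (hm : 1 ≤ m)
    (u v : Fin d → ZMod 2)
    (hact : (Finset.univ.filter (fun i : Fin d => u i = 1 ∨ v i = 1)).card ≤ 2 * ψ) :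
    ((Finset.univ.filter (fun b : Fin d → Fin N =>
        ∃ p : Fin m → Fin d × Fin d,
          Function.Injective
            (fun x : Fin m × Bool => if x.2 then (p x.1).1 else (p x.1).2) ∧
          (∀ t : Fin m,
            (u (p t).1 = 1 ∨ v (p t).1 = 1) ∧ (u (p t).2 = 1 ∨ v (p t).2 = 1)) ∧
          (∀ t : Fin m, b (p t).1 = b (p t).2) ∧
          (∀ s t : Fin m, s ≠ t → b (p s).1 ≠ b (p t).1))).card : ℝ) /
      (Fintype.card (Fin d → Fin N) : ℝ) ≤
    (2 * (ψ : ℝ)) ^ (2 * m) / (N : ℝ) ^ m :=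
  bcs_many_collisions_prob_general d N ψ m hN u v hact
end

section
/- Let u, v ∈ {0,1}^d and let b : {1,...,d} → {1,...,N} be any bucket assignment under which the compressed vectors u', v' share exactly c corrupted buckets (buckets receiving ≥ 2 active positions). Then |d_H(u', v') - d_H(u, v)| ≤ 2·(number of active positions in corrupted buckets) and in particular d_H(u, v) - d_H(u', v') is at most the number of unmatched positions lying in corrupted buckets. -/
/-!
Bucket by bucket, the difference of the two compressed coordinates is, in `ZMod 2`, the number
`m` of unmatched positions in the bucket. Hence a compressed mismatch forces `m ≥ 1`, so the
compressed distance never exceeds the original one; and a bucket that is not corrupted holds at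
most one active position, hence `m ≤ 1`, and then `m = 1` is seen as a compressed mismatch. So
only unmatched positions in corrupted buckets can be lost, and there are no more of them than
active positions in corrupted buckets.
-/

open Finset

namespace ZMod

theorem two_sub_eq_ite_ne (x y : ZMod 2) : x - y = if x ≠ y then 1 else 0 := by
  revert x y; decide

theorem two_eq_one_or_eq_one_of_ne {x y : ZMod 2} (h : x ≠ y) : x = 1 ∨ y = 1 := by
  revert x y; decide

theorem two_sum_sub_sum_eq_card_ne {ι : Type*} (s : Finset ι) (u v : ι → ZMod 2) :
    ∑ i ∈ s, u i - ∑ i ∈ s, v i = (#{i ∈ s | u i ≠ v i} : ZMod 2) := by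
  rw [← sum_sub_distrib, ← sum_boole]
  exact sum_congr rfl fun i _ => two_sub_eq_ite_ne (u i) (v i)

theorem two_ite_ne_le_of_sub_eq {x y : ZMod 2} {m : ℕ} (h : x - y = m) :
    (if x ≠ y then 1 else 0) ≤ m := by
  split_ifs with hxy
  · refine Nat.one_le_iff_ne_zero.mpr fun hm => hxy ?_
    rwa [hm, Nat.cast_zero, sub_eq_zero] at h
  · exact Nat.zero_le m

theorem two_le_ite_ne_of_sub_eq {x y : ZMod 2} {m : ℕ} (h : x - y = m) (hm : m ≤ 1) :
    m ≤ if x ≠ y then 1 else 0 := by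
  interval_cases m
  · exact Nat.zero_le _
  · rw [if_pos]
    rintro rfl
    simp at h

end ZMod

theorem Finset.card_filter_and_comp_eq_sum {ι κ : Type*} [Fintype ι] [Fintype κ]
    [DecidableEq κ] (b : ι → κ) (p : ι → Prop) [DecidablePred p] (q : κ → Prop)
    [DecidablePred q] :
    #{i | p i ∧ q (b i)} = ∑ j with q j, #{i | b i = j ∧ p i} := by
  rw [card_eq_sum_card_fiberwise (f := b) (t := {j | q j}) fun i hi => by simp_all]
  refine sum_congr rfl fun j hj => congrArg card (ext fun i => ?_)
  simp only [mem_filter, mem_univ, true_and] at hj ⊢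
  constructor
  · rintro ⟨⟨hp, -⟩, rfl⟩
    exact ⟨rfl, hp⟩
  · rintro ⟨rfl, hp⟩
    exact ⟨⟨hp, hj⟩, rfl⟩

namespace BucketCompression

variable {ι κ : Type*} [Fintype ι] [DecidableEq κ] (b : ι → κ) (u v : ι → ZMod 2)

def compress (u : ι → ZMod 2) (j : κ) : ZMod 2 := ∑ i with b i = j, u i

def unmatchedIn (j : κ) : ℕ := #{i | b i = j ∧ u i ≠ v i}

def activeIn (j : κ) : ℕ := #{i | b i = j ∧ (u i = 1 ∨ v i = 1)}

theorem unmatchedIn_le_activeIn (j : κ) : unmatchedIn b u v j ≤ activeIn b u v j := by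
  refine card_le_card fun i hi => ?_
  simp only [mem_filter, mem_univ, true_and] at hi ⊢
  exact ⟨hi.1, ZMod.two_eq_one_or_eq_one_of_ne hi.2⟩

theorem compress_sub_compress (j : κ) :
    compress b u j - compress b v j = unmatchedIn b u v j := by
  rw [compress, compress, ZMod.two_sum_sub_sum_eq_card_ne, filter_filter, unmatchedIn]

variable [Fintype κ]

theorem hammingDist_eq_sum_unmatchedIn : hammingDist u v = ∑ j, unmatchedIn b u v j := by
  simpa [hammingDist, unmatchedIn] using
    card_filter_and_comp_eq_sum b (fun i => u i ≠ v i) (fun _ => True)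

theorem card_unmatched_corrupted_eq_sum :
    #{i | u i ≠ v i ∧ 2 ≤ activeIn b u v (b i)} =
      ∑ j with 2 ≤ activeIn b u v j, unmatchedIn b u v j :=
  card_filter_and_comp_eq_sum b (fun i => u i ≠ v i) (fun j => 2 ≤ activeIn b u v j)

theorem card_active_corrupted_eq_sum :
    #{i | (u i = 1 ∨ v i = 1) ∧ 2 ≤ activeIn b u v (b i)} =
      ∑ j with 2 ≤ activeIn b u v j, activeIn b u v j :=
  card_filter_and_comp_eq_sum b (fun i => u i = 1 ∨ v i = 1) (fun j => 2 ≤ activeIn b u v j)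

theorem hammingDist_compress_le :
    hammingDist (compress b u) (compress b v) ≤ hammingDist u v := by
  rw [hammingDist, card_filter, hammingDist_eq_sum_unmatchedIn b]
  exact sum_le_sum fun j _ => ZMod.two_ite_ne_le_of_sub_eq (compress_sub_compress b u v j)

theorem hammingDist_le_hammingDist_compress_add :
    hammingDist u v ≤ hammingDist (compress b u) (compress b v) +
      #{i | u i ≠ v i ∧ 2 ≤ activeIn b u v (b i)} := by
  rw [hammingDist_eq_sum_unmatchedIn b, hammingDist, card_filter,
    card_unmatched_corrupted_eq_sum, sum_filter, ← sum_add_distrib]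
  refine sum_le_sum fun j _ => ?_
  by_cases hcorrupt : 2 ≤ activeIn b u v j
  · rw [if_pos hcorrupt]
    exact Nat.le_add_left _ _
  · have hm : unmatchedIn b u v j ≤ 1 := by
      have := unmatchedIn_le_activeIn b u v j
      omega
    rw [if_neg hcorrupt, add_zero]
    exact ZMod.two_le_ite_ne_of_sub_eq (compress_sub_compress b u v j) hm

theorem card_unmatched_corrupted_le_card_active_corrupted :
    #{i | u i ≠ v i ∧ 2 ≤ activeIn b u v (b i)} ≤
      #{i | (u i = 1 ∨ v i = 1) ∧ 2 ≤ activeIn b u v (b i)} := by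
  rw [card_unmatched_corrupted_eq_sum, card_active_corrupted_eq_sum]
  exact sum_le_sum fun j _ => unmatchedIn_le_activeIn b u v j

theorem abs_hammingDist_compress_sub_le :
    |(hammingDist (compress b u) (compress b v) : ℤ) - hammingDist u v| ≤
      #{i | u i ≠ v i ∧ 2 ≤ activeIn b u v (b i)} := by
  have hle := hammingDist_compress_le b u v
  have hge := hammingDist_le_hammingDist_compress_add b u v
  rw [abs_le]
  constructor <;> omega

theorem abs_hammingDist_compress_sub_le_two_mul :
    |(hammingDist (compress b u) (compress b v) : ℤ) - hammingDist u v| ≤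
      2 * #{i | (u i = 1 ∨ v i = 1) ∧ 2 ≤ activeIn b u v (b i)} := by
  have hdev := abs_hammingDist_compress_sub_le b u v
  have hcount := card_unmatched_corrupted_le_card_active_corrupted b u v
  omega

theorem hammingDist_sub_hammingDist_compress_le :
    (hammingDist u v : ℤ) - hammingDist (compress b u) (compress b v) ≤
      #{i | u i ≠ v i ∧ 2 ≤ activeIn b u v (b i)} :=
  (le_abs_self _).trans (abs_sub_comm (α := ℤ) _ _ ▸ abs_hammingDist_compress_sub_le b u v)

end BucketCompression

open BucketCompression in
/-- The deviation of the compressed Hamming distance from the original one is controlled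
by the corrupted buckets: it is at most twice the number of active positions lying in
corrupted buckets, and `d_H(u,v) - d_H(u',v')` is at most the number of unmatched
positions lying in corrupted buckets. -/
theorem bcs_deviation_bounded_by_corruption (d N : ℕ) (u v : Fin d → ZMod 2)
    (b : Fin d → Fin N) :
    |(hammingDist
        (fun j : Fin N => ∑ i ∈ Finset.univ.filter (fun i => b i = j), u i)
        (fun j : Fin N => ∑ i ∈ Finset.univ.filter (fun i => b i = j), v i) : ℤ) -
      (hammingDist u v : ℤ)| ≤
      2 * ((Finset.univ.filter (fun i : Fin d => (u i = 1 ∨ v i = 1) ∧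
        2 ≤ (Finset.univ.filter (fun i' : Fin d =>
          b i' = b i ∧ (u i' = 1 ∨ v i' = 1))).card)).card : ℤ) ∧
    (hammingDist u v : ℤ) -
      (hammingDist
        (fun j : Fin N => ∑ i ∈ Finset.univ.filter (fun i => b i = j), u i)
        (fun j : Fin N => ∑ i ∈ Finset.univ.filter (fun i => b i = j), v i) : ℤ) ≤
      ((Finset.univ.filter (fun i : Fin d => u i ≠ v i ∧
        2 ≤ (Finset.univ.filter (fun i' : Fin d =>
          b i' = b i ∧ (u i' = 1 ∨ v i' = 1))).card)).card : ℤ) := by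
  exact ⟨abs_hammingDist_compress_sub_le_two_mul b u v,
    hammingDist_sub_hammingDist_compress_le b u v⟩
end
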